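/- There exist unit vectors a₁, a₂, b₁, b₂ ∈ S² ⊂ ℝ³ such that a₁·b₁ + a₁·b₂ + a₂·b₁ - a₂·b₂ = 2√2. Consequently, the quantum correlation E(AB|a,b) = -a·b attains the value -2√2 < -2 for the CHSH expression C(a₁,a₂,b₁,b₂) = E(a₁,b₁) + E(a₁,b₂) + E(a₂,b₁) - E(a₂,b₂), violating the CHSH inequality. -/

import Mathlib

open scoped RealInnerProductSpace

/-!
Take an orthonormal pair `a₁, a₂` and put `b₁ = (a₁ + a₂)/√2`, `b₂ = (a₁ - a₂)/√2`;
orthogonality is what makes `b₁, b₂` unit vectors. Regrouping the CHSH sum as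
`⟪a₁, b₁ + b₂⟫ + ⟪a₂, b₁ - b₂⟫ = ⟪a₁, √2 a₁⟫ + ⟪a₂, √2 a₂⟫` gives `2√2 > 2`.
-/

section Tsirelson

variable {E : Type*} [NormedAddCommGroup E] [InnerProductSpace ℝ E] {a₁ a₂ : E}

theorem chsh_eq_inner_add_add_inner_sub (a₁ a₂ b₁ b₂ : E) :
    ⟪a₁, b₁⟫ + ⟪a₁, b₂⟫ + ⟪a₂, b₁⟫ - ⟪a₂, b₂⟫ = ⟪a₁, b₁ + b₂⟫ + ⟪a₂, b₁ - b₂⟫ := by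
  rw [inner_add_right, inner_sub_right]
  ring

theorem norm_inv_sqrt_two_smul_add_of_orthonormal (h₁ : ‖a₁‖ = 1) (h₂ : ‖a₂‖ = 1)
    (h₁₂ : ⟪a₁, a₂⟫ = 0) : ‖(√2)⁻¹ • (a₁ + a₂)‖ = 1 := by
  rw [norm_smul, norm_add_eq_sqrt_iff_real_inner_eq_zero.2 h₁₂, h₁, h₂, norm_inv,
    Real.norm_of_nonneg (Real.sqrt_nonneg 2)]
  norm_num

theorem norm_inv_sqrt_two_smul_sub_of_orthonormal (h₁ : ‖a₁‖ = 1) (h₂ : ‖a₂‖ = 1)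
    (h₁₂ : ⟪a₁, a₂⟫ = 0) : ‖(√2)⁻¹ • (a₁ - a₂)‖ = 1 := by
  rw [norm_smul, norm_sub_eq_sqrt_iff_real_inner_eq_zero.2 h₁₂, h₁, h₂, norm_inv,
    Real.norm_of_nonneg (Real.sqrt_nonneg 2)]
  norm_num

theorem chsh_inv_sqrt_two_smul_of_norm_eq_one (h₁ : ‖a₁‖ = 1) (h₂ : ‖a₂‖ = 1) :
    let b₁ := (√2)⁻¹ • (a₁ + a₂)
    let b₂ := (√2)⁻¹ • (a₁ - a₂)
    ⟪a₁, b₁⟫ + ⟪a₁, b₂⟫ + ⟪a₂, b₁⟫ - ⟪a₂, b₂⟫ = 2 * √2 := by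
  intro b₁ b₂
  have hsum : b₁ + b₂ = (√2)⁻¹ • (2 : ℝ) • a₁ := by
    rw [← smul_add, two_smul, add_add_sub_cancel]
  have hdiff : b₁ - b₂ = (√2)⁻¹ • (2 : ℝ) • a₂ := by
    rw [← smul_sub, two_smul, add_sub_sub_cancel]
  rw [chsh_eq_inner_add_add_inner_sub, hsum, hdiff, inner_smul_right, inner_smul_right,
    inner_smul_right, inner_smul_right, real_inner_self_eq_norm_sq, real_inner_self_eq_norm_sq,
    h₁, h₂]
  field_simp
  norm_num

end Tsirelson

theorem chsh_quantum_violation :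
    ∃ a₁ a₂ b₁ b₂ : EuclideanSpace ℝ (Fin 3),
      ‖a₁‖ = 1 ∧ ‖a₂‖ = 1 ∧ ‖b₁‖ = 1 ∧ ‖b₂‖ = 1 ∧
      ⟪a₁, b₁⟫ + ⟪a₁, b₂⟫ + ⟪a₂, b₁⟫ - ⟪a₂, b₂⟫ = 2 * Real.sqrt 2 ∧
      (-⟪a₁, b₁⟫) + (-⟪a₁, b₂⟫) + (-⟪a₂, b₁⟫) - (-⟪a₂, b₂⟫) = -(2 * Real.sqrt 2) ∧
      (-(2 * Real.sqrt 2) : ℝ) < -2 := by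
  obtain ⟨hnorm, horth⟩ := EuclideanSpace.orthonormal_single (𝕜 := ℝ) (ι := Fin 3)
  have h₁ := hnorm 0
  have h₂ := hnorm 1
  have h₁₂ : ⟪EuclideanSpace.single (0 : Fin 3) (1 : ℝ), EuclideanSpace.single 1 1⟫ = 0 :=
    horth (by decide)
  have hchsh := chsh_inv_sqrt_two_smul_of_norm_eq_one h₁ h₂
  have := Real.one_lt_sqrt_two
  exact ⟨_, _, _, _, h₁, h₂, norm_inv_sqrt_two_smul_add_of_orthonormal h₁ h₂ h₁₂,
    norm_inv_sqrt_two_smul_sub_of_orthonormal h₁ h₂ h₁₂, hchsh, by linarith, by linarith⟩
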